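/- For every integer p ≥ 0, the sum over i from 1 to p of i·C(2p+3, 2i+2) equals (2p-1)·2^(2p) + 1. -/

import Mathlib

/-!
Absorption, `(2i + 2) C(2p+3, 2i+2) = (2p+3) C(2p+2, 2i+1)`, turns the weighted sum into
`(2p+3)/2` times a sum of odd-index binomial coefficients of `2p+2` minus a sum of even-index
ones of `2p+3`. By Pascal's rule each parity class of a row `n ≥ 1` sums to `2^(n-1)`; the even
sum here only lacks its term `C(2p+3, 0) = 1`.
-/

open Finset

theorem sum_range_two_mul {M : Type*} [AddCommMonoid M] (f : ℕ → M) (m : ℕ) :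
    ∑ k ∈ range (2 * m), f k = ∑ i ∈ range m, (f (2 * i) + f (2 * i + 1)) := by
  induction m with
  | zero => simp
  | succ m ih =>
    rw [Nat.mul_succ, sum_range_succ, sum_range_succ, ih, sum_range_succ, add_assoc]

namespace Nat

theorem sum_range_choose_of_lt {n m : ℕ} (h : n < m) :
    ∑ k ∈ range m, n.choose k = 2 ^ n := by
  rw [← sum_range_choose, eq_comm]
  refine sum_subset (range_subset_range.2 h) fun k _ hk => ?_
  exact choose_eq_zero_of_lt (by simpa using hk)

theorem sum_range_choose_odd {n m : ℕ} (h : n < 2 * m) :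
    ∑ i ∈ range m, (n + 1).choose (2 * i + 1) = 2 ^ n := by
  simp only [choose_succ_succ', ← sum_range_two_mul (n.choose ·), sum_range_choose_of_lt h]

theorem sum_range_choose_even {n m : ℕ} (h : n + 1 < 2 * m) :
    ∑ i ∈ range m, (n + 1).choose (2 * i) = 2 ^ n := by
  have htotal := sum_range_choose_of_lt h
  rw [sum_range_two_mul, sum_add_distrib, sum_range_choose_odd (by omega), pow_succ] at htotal
  omega

end Nat

theorem sum_i_choose_odd_even (p : ℕ) :
    ∑ i ∈ Finset.Icc 1 p, (i : ℤ) * Nat.choose (2 * p + 3) (2 * i + 2) =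
      (2 * (p : ℤ) - 1) * 2 ^ (2 * p) + 1 := by
  have hodd : ∑ i ∈ range (p + 1), ((2 * p + 2).choose (2 * i + 1) : ℤ) = 2 ^ (2 * p + 1) :=
    mod_cast Nat.sum_range_choose_odd (by omega)
  have heven : ∑ i ∈ range (p + 1), ((2 * p + 3).choose (2 * i + 2) : ℤ) = 2 ^ (2 * p + 2) - 1 := by
    rw [eq_sub_iff_add_eq]
    norm_cast
    rw [← Nat.sum_range_choose_even (n := 2 * p + 2) (m := p + 2) (by omega),
      sum_range_succ' _ (p + 1)]
    rfl
  have habsorb (i : ℕ) : 2 * ((i : ℤ) * (2 * p + 3).choose (2 * i + 2)) =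
      (2 * p + 3) * (2 * p + 2).choose (2 * i + 1) - 2 * (2 * p + 3).choose (2 * i + 2) := by
    have h : ((2 * p + 3 : ℕ) : ℤ) * (2 * p + 2).choose (2 * i + 1) =
        (2 * p + 3).choose (2 * i + 2) * ((2 * i + 2 : ℕ) : ℤ) :=
      mod_cast Nat.add_one_mul_choose_eq (2 * p + 2) (2 * i + 1)
    push_cast at h
    linear_combination -h
  have hrange : ∑ i ∈ Icc 1 p, (i : ℤ) * (2 * p + 3).choose (2 * i + 2) =
      ∑ i ∈ range (p + 1), (i : ℤ) * (2 * p + 3).choose (2 * i + 2) := by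
    rw [range_eq_Ico, sum_eq_sum_Ico_succ_bot (by omega), Nat.cast_zero, zero_mul, zero_add]
    rfl
  have htwice : 2 * ∑ i ∈ range (p + 1), (i : ℤ) * (2 * p + 3).choose (2 * i + 2) =
      (2 * p + 3) * 2 ^ (2 * p + 1) - 2 * (2 ^ (2 * p + 2) - 1) := by
    rw [mul_sum, sum_congr rfl fun i _ => habsorb i, sum_sub_distrib, ← mul_sum, ← mul_sum,
      hodd, heven]
  rw [hrange]
  rw [pow_succ, pow_succ, pow_succ] at htwice
  linarith
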